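/- There exists a language K and alphabets E₁, E₂, E_k such that K is conditionally decomposable with respect to E₁, E₂, E_k but the prefix closure \overline{K} is not conditionally decomposable with respect to the same alphabets. Concretely, for E₁ = {a₁,b₁,a,b}, E₂ = {a₂,b₂,a,b}, E_k = {a,b} and K = {a₁a₂a, a₂a₁a, b₁b₂b, b₂b₁b}, it holds that K = P_{1+k}(K) ∥ P_{2+k}(K) but \overline{K} ≠ \overline{P_{1+k}(K)} ∥ \overline{P_{2+k}(K)} (in particular a₁b₂ ∈ \overline{P_{1+k}(K)} ∥ \overline{P_{2+k}(K)} but a₁b₂ ∉ \overline{K}). -/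

import Mathlib

open scoped Classical

/-- Natural projection: erase letters not in `A`. -/
noncomputable def proj {Ev : Type*} (A : Set Ev) (w : List Ev) : List Ev :=
  w.filter (fun a => decide (a ∈ A))

/-- Projection of a language. -/
noncomputable def projL {Ev : Type*} (A : Set Ev) (L : Set (List Ev)) : Set (List Ev) :=
  proj A '' L

/-- Words over an alphabet `A`, i.e., `A*`. -/
def star {Ev : Type*} (A : Set Ev) : Set (List Ev) := {w | ∀ a ∈ w, a ∈ A}

/-- Synchronous product of `L₁ ⊆ A*` and `L₂ ⊆ B*`. -/
noncomputable def sync {Ev : Type*} (A B : Set Ev) (L1 L2 : Set (List Ev)) :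
    Set (List Ev) :=
  {w | w ∈ star (A ∪ B) ∧ proj A w ∈ L1 ∧ proj B w ∈ L2}

/-- Prefix closure of a language. -/
def prefixCl {Ev : Type*} (L : Set (List Ev)) : Set (List Ev) := {w | ∃ v, w ++ v ∈ L}

/-- Controllability of `K` with respect to (prefix-closed) `L` and uncontrollable events `Eu`. -/
def controllable {Ev : Type*} (K L : Set (List Ev)) (Eu : Set Ev) : Prop :=
  ∀ s ∈ prefixCl K, ∀ u ∈ Eu, s ++ [u] ∈ L → s ++ [u] ∈ prefixCl K

/-- Supremal controllable sublanguage of `K` w.r.t. `N` and `U`. -/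
noncomputable def supC {Ev : Type*} (K N : Set (List Ev)) (U : Set Ev) : Set (List Ev) :=
  ⋃₀ {M | M ⊆ K ∧ controllable M N U}

/-- `proj A` is an `L`-observer. -/
def observer {Ev : Type*} (A : Set Ev) (L : Set (List Ev)) : Prop :=
  ∀ t ∈ projL A L, ∀ s ∈ prefixCl L, proj A s <+: t →
    ∃ u, s ++ u ∈ L ∧ proj A (s ++ u) = t

/-- `proj A` is locally control consistent (LCC) for `L` (w.r.t. uncontrollable events `Eu`). -/
def lcc {Ev : Type*} (A Eu : Set Ev) (L : Set (List Ev)) : Prop :=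
  ∀ s ∈ L, ∀ σ ∈ A ∩ Eu, proj A s ++ [σ] ∈ projL A L →
    (∃ u, (∀ a ∈ u, a ∉ A) ∧ s ++ u ++ [σ] ∈ L) →
    ∃ u, (∀ a ∈ u, a ∈ Eu ∧ a ∉ A) ∧ s ++ u ++ [σ] ∈ L

/-- Events for the counterexample of STATEMENT 1. -/
inductive Ev1 where
  | a1 | b1 | a2 | b2 | a | b
deriving DecidableEq

/-!
A word of `P_{1+k}(K) ∥ P_{2+k}(K)` projects to `a₁a` or `b₁b` and to `a₂a` or `b₂b`. Counting
letters, its length is `2 + 2 - 1 = 3`, since exactly one letter (`a` or `b`) is shared, and a finite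
check shows that it lies in `K`. After taking prefixes this synchronisation is lost: the prefixes
`a₁` of `a₁a` and `b₂` of `b₂b` contain no shared letter, so `a₁b₂` lies in the product of the
prefix closures although it is not a prefix of any word of `K`.
-/

section Projection

variable {Ev : Type*}

@[simp]
lemma proj_nil (A : Set Ev) : proj A [] = [] := rfl

@[simp]
lemma proj_cons (A : Set Ev) (x : Ev) (w : List Ev) :
    proj A (x :: w) = if x ∈ A then x :: proj A w else proj A w := by
  by_cases h : x ∈ A <;> simp [proj, h]

lemma proj_proj (A B : Set Ev) (w : List Ev) : proj B (proj A w) = proj (A ∩ B) w := by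
  simp [proj, List.filter_filter, Bool.and_comm]

lemma length_proj_add_length_proj {A B : Set Ev} {w : List Ev} (hw : w ∈ star (A ∪ B)) :
    (proj A w).length + (proj B w).length = w.length + (proj (A ∩ B) w).length := by
  induction w with
  | nil => rfl
  | cons x w ih =>
    have hx : x ∈ A ∨ x ∈ B := hw x (List.mem_cons_self ..)
    have := ih fun y hy => hw y (List.mem_cons_of_mem x hy)
    by_cases hA : x ∈ A <;> by_cases hB : x ∈ B <;> simp_all <;> omega

end Projection

namespace Ev1

def E1k : Set Ev1 := {a1, b1, a, b} ∪ {a, b}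

def E2k : Set Ev1 := {a2, b2, a, b} ∪ {a, b}

def K : Set (List Ev1) := {[a1, a2, a], [a2, a1, a], [b1, b2, b], [b2, b1, b]}

lemma projL_E1k_K : projL E1k K = {[a1, a], [b1, b]} := by
  simp [projL, K, E1k, Set.image_insert_eq]

lemma projL_E2k_K : projL E2k K = {[a2, a], [b2, b]} := by
  simp [projL, K, E2k, Set.image_insert_eq]

lemma length_eq_three_of_mem_sync {w : List Ev1}
    (hw : w ∈ sync E1k E2k (projL E1k K) (projL E2k K)) : w.length = 3 := by
  obtain ⟨hstar, h1, h2⟩ := hw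
  simp only [projL_E1k_K, Set.mem_insert_iff, Set.mem_singleton_iff] at h1
  simp only [projL_E2k_K, Set.mem_insert_iff, Set.mem_singleton_iff] at h2
  have hshared : (proj (E1k ∩ E2k) w).length = 1 := by
    rw [← proj_proj]
    rcases h1 with h | h <;> simp [h, E2k]
  have hcount := length_proj_add_length_proj hstar
  rcases h1 with h | h <;> rcases h2 with h' | h' <;> simp [h, h', hshared] at hcount <;> omega

lemma K_eq_sync : K = sync E1k E2k (projL E1k K) (projL E2k K) := by
  ext w
  constructor
  · intro hw
    refine ⟨fun x _ => by cases x <;> simp [E1k, E2k], ⟨w, hw, rfl⟩, ⟨w, hw, rfl⟩⟩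
  · intro hw
    obtain ⟨x, y, z, rfl⟩ := List.length_eq_three.mp (length_eq_three_of_mem_sync hw)
    obtain ⟨-, h1, h2⟩ := hw
    rw [projL_E1k_K] at h1
    rw [projL_E2k_K] at h2
    cases x <;> cases y <;> cases z <;> simp_all [K, E1k, E2k]

lemma a1_b2_mem_sync_prefixCl :
    [a1, b2] ∈ sync E1k E2k (prefixCl (projL E1k K)) (prefixCl (projL E2k K)) := by
  rw [projL_E1k_K, projL_E2k_K]
  refine ⟨fun x _ => by cases x <;> simp [E1k, E2k], ⟨[a], ?_⟩, ⟨[b], ?_⟩⟩ <;> simp [E1k, E2k]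

lemma a1_b2_not_mem_prefixCl_K : [a1, b2] ∉ prefixCl K := by
  rintro ⟨v, hv⟩
  simp [K] at hv

end Ev1

open Ev1 in
/-- K is conditionally decomposable but its prefix closure is not. -/
theorem stmt1 :
    let E1 : Set Ev1 := {a1, b1, a, b}
    let E2 : Set Ev1 := {a2, b2, a, b}
    let Ek : Set Ev1 := {a, b}
    let K : Set (List Ev1) :=
      {[a1, a2, a], [a2, a1, a], [b1, b2, b], [b2, b1, b]}
    K = sync (E1 ∪ Ek) (E2 ∪ Ek) (projL (E1 ∪ Ek) K) (projL (E2 ∪ Ek) K) ∧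
    [a1, b2] ∈ sync (E1 ∪ Ek) (E2 ∪ Ek)
      (prefixCl (projL (E1 ∪ Ek) K)) (prefixCl (projL (E2 ∪ Ek) K)) ∧
    [a1, b2] ∉ prefixCl K ∧
    prefixCl K ≠ sync (E1 ∪ Ek) (E2 ∪ Ek)
      (prefixCl (projL (E1 ∪ Ek) K)) (prefixCl (projL (E2 ∪ Ek) K)) :=
  ⟨K_eq_sync, a1_b2_mem_sync_prefixCl, a1_b2_not_mem_prefixCl_K,
    (ne_of_mem_of_not_mem' a1_b2_mem_sync_prefixCl a1_b2_not_mem_prefixCl_K).symm⟩
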